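/- If (p,k) is a circular pair with k even, then V_4(p) = 3p(k-1) − k³; if k is odd and both (p,k) and (p,2k) are circular, then V_4(p) = p(2k-1) − k³. -/

import Mathlib

/-!
Write `T(u) = ∑_{a ∈ Φ} ψ(a u)` for the standard additive character `ψ` of `𝔽_p`, so that
`η_s = T(g^s)`. Expanding `|T(u)|⁴` and using orthogonality of `ψ` gives
`∑_{u ∈ 𝔽_p} |T(u)|⁴ = p · E(Φ)` with `E(Φ)` the additive energy of `Φ`; as `T` is constant on the
cosets of `Φ` and `T(0) = k`, this reads `k · V₄(p) = p · E(Φ) - k⁴`.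

The energy is `∑_x r(x)²`, where `r(x)` counts the pairs `(a, b) ∈ Φ²` with `a + b = x`.
Circularity, applied to the circles `Φ` and `x - Φ`, gives `r(x) ≤ 2` for `x ≠ 0`, and the swap
`(a, b) ↦ (b, a)` has at most the fixed point `(x/2, x/2)`, so `r(x)² = 2 r(x) - [x ∈ 2Φ]` for
`x ≠ 0`. Finally `r(0) = k` or `0` according as `-1 ∈ Φ` or not, i.e. as `k` is even or odd, which
gives `E(Φ) = 3k² - 3k`, resp. `E(Φ) = 2k² - k`.
-/

/-- The pair `(p, Φ)` (for `Φ ≤ F_p^×`) is *circular* if any two distinct translated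
"circles" `Φa + b` and `Φc + e` intersect in at most two points. -/
def IsCircular (p : ℕ) (Φ : Subgroup (ZMod p)ˣ) : Prop :=
  ∀ a c : (ZMod p)ˣ, ∀ b e : ZMod p,
    ((fun φ : (ZMod p)ˣ => (φ : ZMod p) * a) '' (Φ : Set (ZMod p)ˣ)
        ≠ (fun φ : (ZMod p)ˣ => (φ : ZMod p) * c) '' (Φ : Set (ZMod p)ˣ) ∨ b ≠ e) →
    Nat.card (((fun φ : (ZMod p)ˣ => (φ : ZMod p) * a + b) '' (Φ : Set (ZMod p)ˣ))
      ∩ ((fun φ : (ZMod p)ˣ => (φ : ZMod p) * c + e) '' (Φ : Set (ZMod p)ˣ)) : Set (ZMod p)) ≤ 2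

open Finset Function
open scoped Combinatorics.Additive

section SumRepresentation

variable {G : Type*} [AddCommGroup G] [DecidableEq G]

def sumRep (S : Finset G) (x : G) : ℕ := #{xy ∈ S ×ˢ S | xy.1 + xy.2 = x}

variable {S : Finset G} {x : G}

lemma sumRep_eq_one_of_add_self (h2 : Injective fun a : G => a + a) {a : G} (ha : a ∈ S)
    (hle : sumRep S (a + a) ≤ 2) : sumRep S (a + a) = 1 := by
  have hdiag : (a, a) ∈ ({xy ∈ S ×ˢ S | xy.1 + xy.2 = a + a} : Finset (G × G)) := by simp [ha]
  refine le_antisymm ?_ (card_pos.2 ⟨_, hdiag⟩)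
  by_contra! hlt
  obtain ⟨⟨b, c⟩, hbc, hne⟩ := exists_mem_ne hlt (a, a)
  have hswap : (c, b) ∈ ({xy ∈ S ×ˢ S | xy.1 + xy.2 = a + a} : Finset (G × G)) := by
    simp only [mem_filter, mem_product] at hbc ⊢
    exact ⟨hbc.1.symm, by rw [add_comm, hbc.2]⟩
  have hbc_ne : b ≠ c := by
    rintro rfl
    simp only [mem_filter] at hbc
    exact hne (by rw [h2 hbc.2])
  refine hle.not_gt <|
    two_lt_card_iff.2 ⟨(a, a), (b, c), (c, b), hdiag, hbc, hswap, hne.symm, ?_, ?_⟩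
  · intro h
    simp only [Prod.mk.injEq] at h
    exact hne (by rw [← h.1, h.2])
  · simpa [eq_comm] using hbc_ne

lemma mem_image_add_self_of_sumRep_eq_one (h : sumRep S x = 1) :
    x ∈ S.image fun a => a + a := by
  obtain ⟨⟨b, c⟩, hbc⟩ := card_eq_one.1 h
  have hmem : (b, c) ∈ ({xy ∈ S ×ˢ S | xy.1 + xy.2 = x} : Finset (G × G)) := by simp [hbc]
  have hswap : (c, b) ∈ ({xy ∈ S ×ˢ S | xy.1 + xy.2 = x} : Finset (G × G)) := by
    simp only [mem_filter, mem_product] at hmem ⊢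
    exact ⟨hmem.1.symm, by rw [add_comm, hmem.2]⟩
  rw [hbc, mem_singleton, Prod.mk.injEq] at hswap
  simp only [mem_filter, mem_product] at hmem
  exact mem_image.2 ⟨b, hmem.1.1, by rw [← hmem.2, hswap.2]⟩

lemma sumRep_sq_add_ite (h2 : Injective fun a : G => a + a) (hle : sumRep S x ≤ 2) :
    sumRep S x ^ 2 + (if x ∈ S.image (fun a => a + a) then 1 else 0) = 2 * sumRep S x := by
  by_cases hx : x ∈ S.image fun a => a + a
  · obtain ⟨a, ha, rfl⟩ := mem_image.1 hx
    rw [sumRep_eq_one_of_add_self h2 ha hle, if_pos hx]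
    rfl
  · have h1 : sumRep S x ≠ 1 := fun h => hx (mem_image_add_self_of_sumRep_eq_one h)
    obtain h | h : sumRep S x = 0 ∨ sumRep S x = 2 := by omega
    all_goals simp [h, hx]

lemma sum_sumRep [Fintype G] (S : Finset G) : ∑ x, sumRep S x = #S ^ 2 := by
  rw [sq, ← card_product,
    card_eq_sum_card_fiberwise (f := fun xy : G × G => xy.1 + xy.2) fun _ _ => mem_univ _]
  rfl

lemma sumRep_zero (S : Finset G) : sumRep S 0 = #{a ∈ S | -a ∈ S} := by
  refine card_nbij' Prod.fst (fun a => (a, -a)) ?_ ?_ ?_ ?_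
  · rintro ⟨a, b⟩ h
    simp only [coe_filter, mem_product, Set.mem_ofPred_eq] at h ⊢
    exact ⟨h.1.1, by rw [← eq_neg_of_add_eq_zero_right h.2]; exact h.1.2⟩
  · intro a h
    simp_all
  · rintro ⟨a, b⟩ h
    simp only [coe_filter, mem_product, Set.mem_ofPred_eq] at h
    simp [eq_neg_of_add_eq_zero_right h.2]
  · intro a _
    rfl

lemma addEnergy_self_eq_sum_sumRep_sq [Fintype G] (S : Finset G) :
    E[S] = ∑ x, sumRep S x ^ 2 :=
  addEnergy_eq_sum_sq S S

theorem addEnergy_add_card_of_sumRep_le_two [Fintype G] (h2 : Injective fun a : G => a + a)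
    (h0 : (0 : G) ∉ S) (hle : ∀ x ≠ 0, sumRep S x ≤ 2) :
    E[S] + #S + 2 * sumRep S 0 = sumRep S 0 ^ 2 + 2 * #S ^ 2 := by
  have hE := add_sum_erase univ (fun x => sumRep S x ^ 2) (mem_univ 0)
  have hR := add_sum_erase univ (sumRep S) (mem_univ 0)
  have hI := add_sum_erase univ (fun x => if x ∈ S.image (fun a => a + a) then 1 else 0)
    (mem_univ 0)
  have h0' : (0 : G) ∉ S.image fun a => a + a := by
    simp only [mem_image, not_exists, not_and]
    intro a ha h
    exact h0 (h2 (h.trans (add_zero 0).symm) ▸ ha)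
  have hcard : ∑ x, (if x ∈ S.image (fun a => a + a) then 1 else 0) = #S := by
    rw [sum_ite_mem, univ_inter, sum_const, smul_eq_mul, mul_one, card_image_of_injective _ h2]
  have hpt : ∑ x ∈ univ.erase 0, (sumRep S x ^ 2 + if x ∈ S.image (fun a => a + a) then 1 else 0)
      = ∑ x ∈ univ.erase 0, 2 * sumRep S x :=
    sum_congr rfl fun x hx => sumRep_sq_add_ite h2 (hle x (ne_of_mem_erase hx))
  rw [if_neg h0', zero_add, hcard] at hI
  rw [sum_add_distrib, ← mul_sum] at hpt
  rw [addEnergy_self_eq_sum_sumRep_sq, ← sum_sumRep S]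
  omega

end SumRepresentation

theorem AddChar.sum_norm_sum_mul_pow_four_eq_card_mul_addEnergy {R : Type*} [CommRing R]
    [Fintype R] [DecidableEq R] {ψ : AddChar R ℂ} (hψ : ψ.IsPrimitive) (S : Finset R) :
    ∑ u, ‖∑ a ∈ S, ψ (a * u)‖ ^ 4 = Fintype.card R * E[S] := by
  have hsq (u : R) :
      ((‖∑ a ∈ S, ψ (a * u)‖ ^ 2 : ℝ) : ℂ) = ∑ y ∈ S ×ˢ S, ψ (u * (y.1 - y.2)) := by
    rw [Complex.ofReal_pow, ← Complex.mul_conj', map_sum, sum_mul_sum, ← sum_product']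
    refine sum_congr rfl fun y _ => ?_
    rw [← AddChar.map_neg_eq_conj, ← AddChar.map_add_eq_mul]
    ring_nf
  have hfour (u : R) : ((‖∑ a ∈ S, ψ (a * u)‖ ^ 4 : ℝ) : ℂ) =
      ∑ x ∈ (S ×ˢ S) ×ˢ (S ×ˢ S), ψ (u * (x.1.1 - x.1.2 + (x.2.1 - x.2.2))) := by
    rw [show 4 = 2 * 2 from rfl, pow_mul, Complex.ofReal_pow, hsq, sq, sum_mul_sum,
      ← sum_product']
    exact sum_congr rfl fun x _ => by rw [← AddChar.map_add_eq_mul, mul_add]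
  apply Complex.ofReal_injective
  simp only [Complex.ofReal_sum, hfour]
  rw [sum_comm]
  simp only [AddChar.sum_mulShift _ hψ]
  have hcount : ∑ x ∈ (S ×ˢ S) ×ˢ (S ×ˢ S),
      (if x.1.1 - x.1.2 + (x.2.1 - x.2.2) = 0 then Fintype.card R else 0) =
      Fintype.card R * E[S] := by
    rw [sum_ite, sum_const_zero, add_zero, sum_const, smul_eq_mul, mul_comm, addEnergy]
    congr 2
    exact filter_congr fun x _ => by rw [sub_add_sub_comm, sub_eq_zero]
  rw [← Nat.cast_sum, hcount]
  push_cast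
  rfl

theorem Function.Periodic.sum_range_mul {M : Type*} [AddCommMonoid M] {f : ℕ → M} {d : ℕ}
    (hf : Periodic f d) (k : ℕ) : ∑ t ∈ range (d * k), f t = k • ∑ s ∈ range d, f s := by
  induction k with
  | zero => simp
  | succ k ih =>
    rw [mul_add_one, sum_range_add, ih, succ_nsmul]
    congr 1
    exact sum_congr rfl fun s _ => by simpa [add_comm, mul_comm] using hf.nat_mul k s

section UnitsSubgroup

variable {M : Type*} [Monoid M]

def Subgroup.valFinset (H : Subgroup Mˣ) [Fintype H] : Finset M :=
  univ.map ⟨fun h : H => ((h : Mˣ) : M), Units.val_injective.comp Subtype.val_injective⟩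

namespace Subgroup

variable {H : Subgroup Mˣ} [Fintype H]

lemma mem_valFinset {x : M} : x ∈ H.valFinset ↔ ∃ u ∈ H, (u : M) = x := by
  simp [valFinset]

lemma card_valFinset : #H.valFinset = Nat.card H := by
  simp [valFinset, Nat.card_eq_fintype_card]

lemma sum_valFinset {N : Type*} [AddCommMonoid N] (f : M → N) :
    ∑ a ∈ H.valFinset, f a = ∑ h : H, f ((h : Mˣ) : M) :=
  sum_map _ _ _

lemma sum_valFinset_mul {N : Type*} [AddCommMonoid N] (f : M → N) {u : Mˣ} (hu : u ∈ H) :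
    ∑ a ∈ H.valFinset, f (a * u) = ∑ a ∈ H.valFinset, f a := by
  rw [sum_valFinset, sum_valFinset]
  exact Fintype.sum_equiv (Equiv.mulRight ⟨u, hu⟩) _ _ fun _ => rfl

lemma zero_notMem_valFinset {M₀ : Type*} [MonoidWithZero M₀] [Nontrivial M₀]
    {H : Subgroup M₀ˣ} [Fintype H] : (0 : M₀) ∉ H.valFinset := by
  rw [mem_valFinset]
  rintro ⟨u, -, hu⟩
  exact u.ne_zero hu

end Subgroup

lemma sum_range_orderOf_pow {G N : Type*} [Group G] [Fintype G] [DecidableEq G]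
    [AddCommMonoid N] (x : G) (f : G → N) :
    ∑ j ∈ range (orderOf x), f (x ^ j) = ∑ h : Subgroup.zpowers x, f h := by
  rw [← sum_image fun i hi j hj h => pow_injOn_Iio_orderOf (x := x) (by simpa using hi)
    (by simpa using hj) h]
  exact sum_subtype _ (fun _ => mem_zpowers_iff_mem_range_orderOf.symm) f

lemma sum_units_eq_sum_sub_zero {K N : Type*} [GroupWithZero K] [Fintype K] [DecidableEq K]
    [AddCommGroup N] (f : K → N) : ∑ u : Kˣ, f u = ∑ x, f x - f 0 := by
  calc ∑ u : Kˣ, f u = ∑ x : {x : K // x ≠ 0}, f x :=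
        Fintype.sum_equiv unitsEquivNeZero _ _ fun _ => rfl
    _ = ∑ x ∈ univ.erase 0, f x := (sum_subtype _ (by simp) f).symm
    _ = ∑ x, f x - f 0 := by rw [← add_sum_erase univ f (mem_univ 0), add_sub_cancel_left]

end UnitsSubgroup

lemma neg_one_mem_zpowers_iff_even {F : Type*} [Field F] [Fintype F] (hF : ringChar F ≠ 2)
    (q : Fˣ) :
    -1 ∈ Subgroup.zpowers q ↔ Even (orderOf q) := by
  have h2 : orderOf (-1 : Fˣ) = 2 := by
    rw [← orderOf_units, Units.val_neg, Units.val_one, orderOf_neg_one, if_neg hF]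
  refine ⟨fun h => even_iff_two_dvd.2 (h2 ▸ orderOf_dvd_of_mem_zpowers h), ?_⟩
  rintro ⟨m, hm⟩
  have hm0 : m ≠ 0 := by
    rintro rfl
    exact (orderOf_pos q).ne' hm
  have hqm : orderOf (q ^ m) = 2 := by
    rw [orderOf_pow_of_dvd hm0 ⟨2, by omega⟩, hm, ← two_mul,
      Nat.mul_div_cancel _ (Nat.pos_of_ne_zero hm0)]
  rw [← orderOf_units, CharP.orderOf_eq_two_iff (ringChar F) hF] at hqm
  have hqm' : q ^ m = -1 := Units.ext (by simpa using hqm)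
  exact hqm' ▸ pow_mem (Subgroup.mem_zpowers q) m

section RingUnits

variable {R : Type*} [Ring R] [DecidableEq R] {H : Subgroup Rˣ} [Fintype H]

lemma sumRep_valFinset_zero_of_neg_one_mem (h : -1 ∈ H) :
    sumRep H.valFinset 0 = Nat.card H := by
  rw [sumRep_zero, filter_true_of_mem, Subgroup.card_valFinset]
  intro a ha
  obtain ⟨u, hu, rfl⟩ := Subgroup.mem_valFinset.1 ha
  exact Subgroup.mem_valFinset.2 ⟨-1 * u, H.mul_mem h hu, by simp⟩

lemma sumRep_valFinset_zero_of_neg_one_notMem (h : -1 ∉ H) :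
    sumRep H.valFinset 0 = 0 := by
  rw [sumRep_zero, card_eq_zero, filter_eq_empty_iff]
  intro a ha hna
  obtain ⟨u, hu, rfl⟩ := Subgroup.mem_valFinset.1 ha
  obtain ⟨v, hv, hvu⟩ := Subgroup.mem_valFinset.1 hna
  have : v * u⁻¹ = -1 := Units.ext (by simp [hvu])
  exact h (this ▸ H.mul_mem hv (H.inv_mem hu))

end RingUnits

lemma sumRep_valFinset_le_two_of_isCircular {p : ℕ} {H : Subgroup (ZMod p)ˣ} [Fintype H]
    (hH : IsCircular p H) {x : ZMod p} (hx : x ≠ 0) : sumRep H.valFinset x ≤ 2 := by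
  refine le_of_eq_of_le ?_ (hH 1 (-1) 0 x (Or.inr (Ne.symm hx)))
  rw [Nat.card_coe_set_eq, sumRep, ← card_image_of_injOn (f := Prod.fst), ← Set.ncard_coe_finset]
  · congr 1
    ext y
    simp only [coe_image, coe_filter, mem_product, Subgroup.mem_valFinset, Set.mem_image,
      Set.mem_inter_iff, SetLike.mem_coe, Units.val_one, Units.val_neg, mul_one, mul_neg, add_zero]
    constructor
    · rintro ⟨⟨a, b⟩, ⟨⟨⟨u, hu, rfl⟩, v, hv, rfl⟩, hsum⟩, rfl⟩
      exact ⟨⟨u, hu, rfl⟩, v, hv, by linear_combination -hsum⟩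
    · rintro ⟨⟨u, hu, rfl⟩, v, hv, hvy⟩
      exact ⟨(u, v), ⟨⟨⟨u, hu, rfl⟩, v, hv, rfl⟩, by linear_combination -hvy⟩, rfl⟩
  · rintro ⟨a, b⟩ hab ⟨a', b'⟩ hab' (rfl : a = a')
    simp only [coe_filter, Set.mem_ofPred_eq] at hab hab'
    simp only [Prod.mk.injEq, true_and]
    exact add_left_cancel (hab.2.trans hab'.2.symm)

section CircularPairs

variable {p : ℕ} [Fact p.Prime] {H : Subgroup (ZMod p)ˣ} [Fintype H]

lemma ZMod.add_self_injective (hp : p ≠ 2) : Injective fun a : ZMod p => a + a := by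
  intro a b hab
  have h2 : (2 : ZMod p) * (a - b) = 0 := by linear_combination hab
  exact sub_eq_zero.1 ((mul_eq_zero.1 h2).resolve_left
    (Ring.two_ne_zero (by rwa [ZMod.ringChar_zmod_n])))

theorem addEnergy_valFinset_of_isCircular (hp : p ≠ 2) (hH : IsCircular p H) :
    E[H.valFinset] + Nat.card H + 2 * sumRep H.valFinset 0 =
      sumRep H.valFinset 0 ^ 2 + 2 * Nat.card H ^ 2 := by
  rw [← Subgroup.card_valFinset]
  exact addEnergy_add_card_of_sumRep_le_two (ZMod.add_self_injective hp)
    Subgroup.zero_notMem_valFinset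
    fun x hx => sumRep_valFinset_le_two_of_isCircular hH hx

theorem addEnergy_valFinset_of_isCircular_of_neg_one_mem (hp : p ≠ 2) (hH : IsCircular p H)
    (h : -1 ∈ H) : E[H.valFinset] + 3 * Nat.card H = 3 * Nat.card H ^ 2 := by
  have hE := addEnergy_valFinset_of_isCircular hp hH
  rw [sumRep_valFinset_zero_of_neg_one_mem h] at hE
  linarith

theorem addEnergy_valFinset_of_isCircular_of_neg_one_notMem (hp : p ≠ 2) (hH : IsCircular p H)
    (h : -1 ∉ H) : E[H.valFinset] + Nat.card H = 2 * Nat.card H ^ 2 := by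
  have hE := addEnergy_valFinset_of_isCircular hp hH
  rwa [sumRep_valFinset_zero_of_neg_one_notMem h, mul_zero, add_zero, zero_pow two_ne_zero,
    zero_add] at hE

end CircularPairs

section GaussianPeriods

open Subgroup

variable {p d k : ℕ} [Fact p.Prime] {g : (ZMod p)ˣ}

lemma orderOf_pow_eq_of_forall_mem_zpowers (hg : ∀ x, x ∈ zpowers g) (hdk : p - 1 = d * k) :
    orderOf (g ^ d) = k := by
  have hord : orderOf g = d * k := by
    rw [orderOf_eq_card_of_forall_mem_zpowers hg, Nat.card_eq_fintype_card, ZMod.card_units, hdk]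
  have hd : d ≠ 0 := by
    rintro rfl
    have := (Fact.out : p.Prime).two_le
    omega
  rw [orderOf_pow_of_dvd hd ⟨k, hord⟩, hord, Nat.mul_div_cancel_left _ (Nat.pos_of_ne_zero hd)]

lemma sum_range_exp_eq_sum_valFinset (d t : ℕ) :
    ∑ j ∈ range (orderOf (g ^ d)), Complex.exp (2 * (Real.pi : ℂ) * Complex.I *
        (((g ^ (d * j + t) : (ZMod p)ˣ) : ZMod p).val : ℂ) / (p : ℂ)) =
      ∑ a ∈ (zpowers (g ^ d)).valFinset, ZMod.stdAddChar (a * ((g ^ t : (ZMod p)ˣ) : ZMod p)) := by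
  rw [sum_valFinset, ← sum_range_orderOf_pow (g ^ d)
    fun u => ZMod.stdAddChar ((u : ZMod p) * ((g ^ t : (ZMod p)ˣ) : ZMod p))]
  refine sum_congr rfl fun j _ => ?_
  rw [ZMod.stdAddChar_apply, ZMod.toCircle_apply, pow_add, pow_mul, Units.val_mul]

theorem card_mul_sum_range_norm_pow_four_eq (hg : ∀ x, x ∈ zpowers g) (hdk : p - 1 = d * k) :
    (k : ℝ) * ∑ s ∈ range d, ‖∑ a ∈ (zpowers (g ^ d)).valFinset,
        ZMod.stdAddChar (a * ((g ^ s : (ZMod p)ˣ) : ZMod p))‖ ^ 4 =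
      p * E[(zpowers (g ^ d)).valFinset] - k ^ 4 := by
  set Φ := (zpowers (g ^ d)).valFinset
  set F : ZMod p → ℝ := fun u => ‖∑ a ∈ Φ, ZMod.stdAddChar (a * u)‖ ^ 4 with hF
  have hΦ : #Φ = k := by
    rw [card_valFinset, Nat.card_zpowers, orderOf_pow_eq_of_forall_mem_zpowers hg hdk]
  have hper : Periodic (fun t => F (g ^ t : (ZMod p)ˣ)) d := fun t => by
    simp only [hF, pow_add, Units.val_mul]
    rw [← sum_valFinset_mul (fun a => ZMod.stdAddChar (a * ((g ^ t : (ZMod p)ˣ) : ZMod p)))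
      (mem_zpowers (g ^ d))]
    simp only [Φ, mul_assoc, mul_comm]
  calc (k : ℝ) * ∑ s ∈ range d, F (g ^ s : (ZMod p)ˣ)
      = ∑ t ∈ range (orderOf g), F (g ^ t : (ZMod p)ˣ) := by
        rw [orderOf_eq_card_of_forall_mem_zpowers hg, Nat.card_eq_fintype_card, ZMod.card_units,
          hdk, hper.sum_range_mul, nsmul_eq_mul]
    _ = ∑ u : (ZMod p)ˣ, F u := by
        rw [sum_range_orderOf_pow g fun u => F u]
        exact Fintype.sum_equiv (Equiv.subtypeUnivEquiv hg) _ _ fun _ => rfl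
    _ = ∑ x, F x - F 0 := sum_units_eq_sum_sub_zero F
    _ = p * E[Φ] - k ^ 4 := by
        rw [hF, AddChar.sum_norm_sum_mul_pow_four_eq_card_mul_addEnergy
          (ZMod.isPrimitive_stdAddChar p), ZMod.card]
        simp [hΦ]

end GaussianPeriods

/-- If `(p,k)` is a circular pair with `k` even, then `V₄(p) = 3p(k-1) − k³`;
if `k` is odd and both `(p,k)` and `(p,2k)` are circular, then `V₄(p) = p(2k-1) − k³`.
Here `Φ = ⟨g^d⟩` has order `k` and, when `k` is odd (so `d` is even), `⟨g^(d/2)⟩` has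
order `2k`. -/
theorem gaussian_periods_V4_fixed_k (p d k : ℕ) (hp : p.Prime) (hodd : Odd p)
    (hk : 0 < k) (hdk : p - 1 = d * k)
    (g : (ZMod p)ˣ) (hg : ∀ x : (ZMod p)ˣ, x ∈ Subgroup.zpowers g)
    (η : ℕ → ℂ)
    (hη : ∀ a : ℕ, η a = ∑ j ∈ Finset.range k,
      Complex.exp (2 * (Real.pi : ℂ) * Complex.I *
        (((g ^ (d * j + a) : (ZMod p)ˣ) : ZMod p).val : ℂ) / (p : ℂ))) :
    (Even k → IsCircular p (Subgroup.zpowers (g ^ d)) →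
      ∑ s ∈ Finset.range d, ‖η s‖ ^ 4
        = 3 * (p : ℝ) * ((k : ℝ) - 1) - (k : ℝ) ^ 3) ∧
    (Odd k → IsCircular p (Subgroup.zpowers (g ^ d)) →
      IsCircular p (Subgroup.zpowers (g ^ (d / 2))) →
      ∑ s ∈ Finset.range d, ‖η s‖ ^ 4
        = (p : ℝ) * (2 * (k : ℝ) - 1) - (k : ℝ) ^ 3) := by
  have : Fact p.Prime := ⟨hp⟩
  have hp2 : p ≠ 2 := by
    rintro rfl
    exact Nat.not_odd_iff_even.2 even_two hodd
  have hq := orderOf_pow_eq_of_forall_mem_zpowers hg hdk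
  have hcard : Nat.card (Subgroup.zpowers (g ^ d)) = k := by rw [Nat.card_zpowers, hq]
  have hV := card_mul_sum_range_norm_pow_four_eq hg hdk
  simp only [← sum_range_exp_eq_sum_valFinset, hq, ← hη] at hV
  have hk0 : (k : ℝ) ≠ 0 := by exact_mod_cast hk.ne'
  have hneg := neg_one_mem_zpowers_iff_even (by rwa [ZMod.ringChar_zmod_n]) (g ^ d)
  refine ⟨fun he hc => ?_, fun ho hc _ => ?_⟩
  · have hE := addEnergy_valFinset_of_isCircular_of_neg_one_mem hp2 hc (hneg.2 (hq ▸ he))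
    have hE' : (E[(Subgroup.zpowers (g ^ d)).valFinset] : ℝ) + 3 * k = 3 * k ^ 2 := by
      exact_mod_cast hcard ▸ hE
    apply mul_left_cancel₀ hk0
    linear_combination hV + (p : ℝ) * hE'
  · have hE := addEnergy_valFinset_of_isCircular_of_neg_one_notMem hp2 hc
      fun h => Nat.not_even_iff_odd.2 ho (hq ▸ hneg.1 h)
    have hE' : (E[(Subgroup.zpowers (g ^ d)).valFinset] : ℝ) + k = 2 * k ^ 2 := by
      exact_mod_cast hcard ▸ hE
    apply mul_left_cancel₀ hk0
    linear_combination hV + (p : ℝ) * hE'
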